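/- The anonymity atom is definable in inclusion logic: for any team X, M ⊨_X 𝗑Υ𝗒 (for every s ∈ X there is s' ∈ X with s(𝗑) = s'(𝗑) and s(𝗒) ≠ s'(𝗒)) if and only if M ⊨_X ∃𝗏(𝗑𝗏 ⊆ 𝗑𝗒 ∧ 𝗏 ≠ 𝗒), where 𝗏 is a sequence of fresh variables and 𝗏 ≠ 𝗒 abbreviates the disjunction ⋁ᵢ vᵢ ≠ yᵢ with disjunction interpreted by team splitting. -/

import Mathlib

namespace TeamSem

variable {M : Type}

/-- A team is a set of assignments (variables are natural numbers). -/
abbrev Team (M : Type) := Set (ℕ → M)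

/-- Lax existential extension of a team `X` along variable `x` by a choice function `F`. -/
def extT (X : Team M) (x : ℕ) (F : (ℕ → M) → Set M) : Team M :=
  {t | ∃ s ∈ X, ∃ a ∈ F s, t = Function.update s x a}

/-- Universal extension of a team `X` along variable `x`. -/
def extAll (X : Team M) (x : ℕ) : Team M :=
  {t | ∃ s ∈ X, ∃ a : M, t = Function.update s x a}

/-- First-order formulas with semantic atoms depending on a finite list of variables. -/
inductive FOForm (M : Type) where
  | atom : List ℕ → (List M → Prop) → FOForm M
  | neg  : FOForm M → FOForm M
  | and  : FOForm M → FOForm M → FOForm M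
  | or   : FOForm M → FOForm M → FOForm M
  | ex   : ℕ → FOForm M → FOForm M
  | all  : ℕ → FOForm M → FOForm M

/-- Tarskian (single-assignment) satisfaction for first-order formulas. -/
def FOForm.sat : FOForm M → (ℕ → M) → Prop
  | .atom l p, s => p (l.map s)
  | .neg φ, s => ¬ FOForm.sat φ s
  | .and φ ψ, s => FOForm.sat φ s ∧ FOForm.sat ψ s
  | .or φ ψ, s => FOForm.sat φ s ∨ FOForm.sat ψ s
  | .ex x φ, s => ∃ a : M, FOForm.sat φ (Function.update s x a)
  | .all x φ, s => ∀ a : M, FOForm.sat φ (Function.update s x a)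

/-- Free variables of a first-order formula. -/
def FOForm.fv : FOForm M → Set ℕ
  | .atom l _ => {v | v ∈ l}
  | .neg φ => FOForm.fv φ
  | .and φ ψ => FOForm.fv φ ∪ FOForm.fv ψ
  | .or φ ψ => FOForm.fv φ ∪ FOForm.fv ψ
  | .ex x φ => FOForm.fv φ \ {x}
  | .all x φ => FOForm.fv φ \ {x}

/-- Formulas of inclusion logic: first-order formulas (with negation applied
only to first-order formulas), inclusion atoms, ∧, ∨, ∃, ∀. -/
inductive IncForm (M : Type) where
  | fo   : FOForm M → IncForm M
  | incl : List ℕ → List ℕ → IncForm M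
  | and  : IncForm M → IncForm M → IncForm M
  | or   : IncForm M → IncForm M → IncForm M
  | ex   : ℕ → IncForm M → IncForm M
  | all  : ℕ → IncForm M → IncForm M

/-- Lax team semantics for inclusion logic. -/
def IncForm.tsat : IncForm M → Team M → Prop
  | .fo α, X => ∀ s ∈ X, FOForm.sat α s
  | .incl xs ys, X => ∀ s ∈ X, ∃ s' ∈ X, xs.map s = ys.map s'
  | .and φ ψ, X => IncForm.tsat φ X ∧ IncForm.tsat ψ X
  | .or φ ψ, X => ∃ Y Z : Team M, X = Y ∪ Z ∧ IncForm.tsat φ Y ∧ IncForm.tsat ψ Z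
  | .ex x φ, X => ∃ F : (ℕ → M) → Set M, (∀ s ∈ X, (F s).Nonempty) ∧
      IncForm.tsat φ (extT X x F)
  | .all x φ, X => IncForm.tsat φ (extAll X x)

/-- Free variables of an inclusion logic formula. -/
def IncForm.fv : IncForm M → Set ℕ
  | .fo α => FOForm.fv α
  | .incl xs ys => {v | v ∈ xs ∨ v ∈ ys}
  | .and φ ψ => IncForm.fv φ ∪ IncForm.fv ψ
  | .or φ ψ => IncForm.fv φ ∪ IncForm.fv ψ
  | .ex x φ => IncForm.fv φ \ {x}
  | .all x φ => IncForm.fv φ \ {x}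

/-- A block of existential quantifiers. -/
def IncForm.exs (l : List ℕ) (φ : IncForm M) : IncForm M := l.foldr IncForm.ex φ

/-- A block of universal quantifiers. -/
def IncForm.alls (l : List ℕ) (φ : IncForm M) : IncForm M := l.foldr IncForm.all φ

/-- The first-order equality atom `x = y`. -/
def eqAtom (x y : ℕ) : FOForm M :=
  .atom [x, y] (fun l => match l with | [a, b] => a = b | _ => False)

/-- The first-order inequality atom `x ≠ y`. -/
def neqAtom (x y : ℕ) : FOForm M :=
  .atom [x, y] (fun l => match l with | [a, b] => a ≠ b | _ => False)

/-- First-order biconditional `α ↔ β`, i.e. `(¬α ∨ β) ∧ (¬β ∨ α)`. -/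
def iffF (a b : FOForm M) : FOForm M := .and (.or (.neg a) b) (.or (.neg b) a)

/-- Conjunction of a list of inclusion logic formulas. -/
def bigAndI (l : List (IncForm M)) : IncForm M :=
  l.foldr IncForm.and (.fo (.atom [] (fun _ => True)))

/-- Disjunction of a list of inclusion logic formulas (empty disjunction is `⊥`). -/
def bigOrI (l : List (IncForm M)) : IncForm M :=
  l.foldr IncForm.or (.fo (.atom [] (fun _ => False)))

/-!
Under lax semantics `∃ v` amounts to passing to a team that agrees with `X` outside `v`.
Given anonymity, put into `v` the `y`-values of an anonymity witness `s'` of `s`: the new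
assignment satisfies `v ≠ y`, and `x v ⊆ x y` holds because `s'` has a witness of its own.
Conversely, the inclusion atom sends `t` to an assignment with the same `x`-values whose
`y`-values are the `v`-values of `t`, and these differ from the `y`-values of `t`.
-/

/-- `X'` arises from `X` by changing the values of the variables in `v`. -/
def IsVariant (v : List ℕ) (X X' : Team M) : Prop :=
  (∀ t ∈ X', ∃ s ∈ X, ∀ u ∉ v, t u = s u) ∧ (∀ s ∈ X, ∃ t ∈ X', ∀ u ∉ v, t u = s u)

lemma isVariant_nil_iff {X X' : Team M} : IsVariant [] X X' ↔ X' = X := by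
  simp only [IsVariant, List.not_mem_nil, not_false_eq_true, forall_const, ← funext_iff]
  constructor
  · rintro ⟨hX'X, hXX'⟩
    ext t
    exact ⟨fun ht => by obtain ⟨s, hs, rfl⟩ := hX'X t ht; exact hs,
      fun ht => by obtain ⟨s, hs, rfl⟩ := hXX' t ht; exact hs⟩
  · rintro rfl
    exact ⟨fun t ht => ⟨t, ht, rfl⟩, fun t ht => ⟨t, ht, rfl⟩⟩

lemma IsVariant.trans {v w : List ℕ} {X Y Z : Team M} (hXY : IsVariant v X Y)
    (hYZ : IsVariant w Y Z) : IsVariant (v ++ w) X Z := by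
  have agree {a b c : ℕ → M} (hab : ∀ u ∉ w, a u = b u) (hbc : ∀ u ∉ v, b u = c u) (u : ℕ)
      (hu : u ∉ v ++ w) : a u = c u := by
    rw [List.mem_append, not_or] at hu
    rw [hab u hu.2, hbc u hu.1]
  constructor
  · intro t ht
    obtain ⟨r, hr, htr⟩ := hYZ.1 t ht
    obtain ⟨s, hs, hrs⟩ := hXY.1 r hr
    exact ⟨s, hs, agree htr hrs⟩
  · intro s hs
    obtain ⟨r, hr, hrs⟩ := hXY.2 s hs
    obtain ⟨t, ht, htr⟩ := hYZ.2 r hr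
    exact ⟨t, ht, agree htr hrs⟩

lemma isVariant_extT {X : Team M} {x : ℕ} {F : (ℕ → M) → Set M}
    (hF : ∀ s ∈ X, (F s).Nonempty) : IsVariant [x] X (extT X x F) := by
  have update_eq {s : ℕ → M} {a : M} (u : ℕ) (hu : u ∉ [x]) : Function.update s x a u = s u :=
    Function.update_of_ne (List.ne_of_not_mem_cons hu) _ _
  constructor
  · rintro t ⟨s, hs, a, -, rfl⟩
    exact ⟨s, hs, update_eq⟩
  · intro s hs
    obtain ⟨a, ha⟩ := hF s hs
    exact ⟨_, ⟨s, hs, a, ha, rfl⟩, update_eq⟩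

/-- Conversely, a variant along `x :: v` factors through a lax extension along `x`: choose
for `s` the values that `x` takes on the assignments of `X'` agreeing with `s` outside `x :: v`. -/
lemma IsVariant.exists_extT {x : ℕ} {v : List ℕ} {X X' : Team M} (h : IsVariant (x :: v) X X') :
    ∃ F : (ℕ → M) → Set M, (∀ s ∈ X, (F s).Nonempty) ∧ IsVariant v (extT X x F) X' := by
  have update_eq {s t : ℕ → M} (hts : ∀ u ∉ x :: v, t u = s u) (u : ℕ) (hu : u ∉ v) :
      t u = Function.update s x (t x) u := by
    by_cases hux : u = x
    · subst hux; rw [Function.update_self]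
    · rw [Function.update_of_ne hux]; exact hts u (by simp [hux, hu])
  refine ⟨fun s => {a | ∃ t ∈ X', (∀ u ∉ x :: v, t u = s u) ∧ a = t x}, ?_, ?_, ?_⟩
  · intro s hs
    obtain ⟨t, ht, hts⟩ := h.2 s hs
    exact ⟨t x, t, ht, hts, rfl⟩
  · intro t ht
    obtain ⟨s, hs, hts⟩ := h.1 t ht
    exact ⟨_, ⟨s, hs, t x, ⟨t, ht, hts, rfl⟩, rfl⟩, update_eq hts⟩
  · rintro - ⟨s, hs, -, ⟨t, ht, hts, rfl⟩, rfl⟩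
    exact ⟨t, ht, update_eq hts⟩

lemma tsat_exs_iff (φ : IncForm M) (v : List ℕ) (X : Team M) :
    (IncForm.exs v φ).tsat X ↔ ∃ X', IsVariant v X X' ∧ φ.tsat X' := by
  induction v generalizing X with
  | nil => simp only [isVariant_nil_iff, exists_eq_left]; rfl
  | cons x v ih =>
    change (∃ F, _ ∧ (IncForm.exs v φ).tsat _) ↔ _
    constructor
    · rintro ⟨F, hF, hφ⟩
      obtain ⟨X', hX', hφ'⟩ := (ih _).mp hφ
      exact ⟨X', (isVariant_extT hF).trans hX', hφ'⟩
    · rintro ⟨X', hX', hφ'⟩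
      obtain ⟨F, hF, hF'⟩ := hX'.exists_extT
      exact ⟨F, hF, (ih _).mpr ⟨X', hF', hφ'⟩⟩

lemma tsat_bigOrI_fo_iff (l : List (FOForm M)) (X : Team M) :
    (bigOrI (l.map IncForm.fo)).tsat X ↔ ∀ t ∈ X, ∃ α ∈ l, α.sat t := by
  induction l generalizing X with
  | nil => simp [bigOrI, IncForm.tsat, FOForm.sat]
  | cons α l ih =>
    change (∃ Y Z, X = Y ∪ Z ∧ (∀ t ∈ Y, α.sat t) ∧ (bigOrI (l.map IncForm.fo)).tsat Z) ↔ _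
    simp only [ih]
    constructor
    · rintro ⟨Y, Z, rfl, hY, hZ⟩ t (ht | ht)
      · exact ⟨α, List.mem_cons_self, hY t ht⟩
      · obtain ⟨β, hβ, hβt⟩ := hZ t ht
        exact ⟨β, List.mem_cons_of_mem α hβ, hβt⟩
    · intro h
      refine ⟨{t ∈ X | α.sat t}, {t ∈ X | ∃ β ∈ l, β.sat t}, ?_, fun t ht => ht.2,
        fun t ht => ht.2⟩
      ext t
      refine ⟨fun ht => ?_, fun ht => ht.elim And.left And.left⟩
      obtain ⟨β, hβ, hβt⟩ := h t ht
      rcases List.mem_cons.mp hβ with rfl | hβ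
      exacts [Or.inl ⟨ht, hβt⟩, Or.inr ⟨ht, β, hβ, hβt⟩]

lemma map_ne_map_iff_exists_zip {v y : List ℕ} (hlen : v.length = y.length) (t : ℕ → M) :
    v.map t ≠ y.map t ↔ ∃ pr ∈ v.zip y, t pr.1 ≠ t pr.2 := by
  rw [Ne, ← List.forall₂_eq_eq_eq, List.forall₂_map_left_iff, List.forall₂_map_right_iff,
    List.forall₂_iff_zip]
  simp [hlen]

lemma tsat_bigOrI_neqAtom_iff {v y : List ℕ} (hlen : v.length = y.length) (X : Team M) :
    (bigOrI ((v.zip y).map fun pr => IncForm.fo (neqAtom pr.1 pr.2))).tsat X ↔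
      ∀ t ∈ X, v.map t ≠ y.map t := by
  rw [show (v.zip y).map (fun pr => IncForm.fo (neqAtom pr.1 pr.2)) =
      ((v.zip y).map fun pr => (neqAtom pr.1 pr.2 : FOForm M)).map IncForm.fo from
    List.map_map.symm, tsat_bigOrI_fo_iff]
  simp [map_ne_map_iff_exists_zip hlen, neqAtom, FOForm.sat]

lemma exists_eqOn_compl_map_eq (s : ℕ → M) {v : List ℕ} (hv : v.Nodup) {as : List M}
    (hlen : as.length = v.length) : ∃ t : ℕ → M, (∀ u ∉ v, t u = s u) ∧ v.map t = as := by
  induction v generalizing as with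
  | nil => exact ⟨s, fun _ _ => rfl, (List.length_eq_zero_iff.mp hlen).symm⟩
  | cons w v ih =>
    obtain ⟨a, as, rfl⟩ := List.exists_cons_of_length_eq_add_one hlen
    obtain ⟨hw, hv⟩ := List.nodup_cons.mp hv
    obtain ⟨t, hts, htv⟩ := ih hv (Nat.succ.inj hlen)
    refine ⟨Function.update t w a, fun u hu => ?_, ?_⟩
    · rw [Function.update_of_ne (List.ne_of_not_mem_cons hu)]
      exact hts u (List.not_mem_of_not_mem_cons hu)
    · rw [List.map_cons, Function.update_self, ← htv]
      exact congrArg _ (List.map_congr_left fun u hu =>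
        Function.update_of_ne (ne_of_mem_of_not_mem hu hw) _ _)

lemma map_eq_map_of_eqOn_compl {v l : List ℕ} (hvl : ∀ u ∈ v, u ∉ l) {t s : ℕ → M}
    (hts : ∀ u ∉ v, t u = s u) : l.map t = l.map s :=
  List.map_congr_left fun u hu => hts u fun hv => hvl u hv hu

section Anonymity

variable {x y v : List ℕ} {X : Team M}

lemma tsat_incl_and_neq_iff (hlen : v.length = y.length) (X' : Team M) :
    (IncForm.and (.incl (x ++ v) (x ++ y))
        (bigOrI ((v.zip y).map fun pr => .fo (neqAtom pr.1 pr.2)))).tsat X' ↔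
      (∀ t ∈ X', ∃ t' ∈ X', x.map t = x.map t' ∧ v.map t = y.map t') ∧
        ∀ t ∈ X', v.map t ≠ y.map t := by
  change (∀ t ∈ X', ∃ t' ∈ X', (x ++ v).map t = (x ++ y).map t') ∧ _ ↔ _
  simp only [List.map_append, tsat_bigOrI_neqAtom_iff hlen]
  refine and_congr_left' (forall₂_congr fun t _ => exists_congr fun t' => and_congr_right' ?_)
  exact List.append_eq_append_iff_of_size_eq_left (by simp)

/-- The witnessing team puts into `v`, for each `s ∈ X`, the `y`-values of every `s'` that
witnesses anonymity for `s`. -/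
lemma exists_variant_of_anonymity (hlen : v.length = y.length) (hvnd : v.Nodup)
    (hvx : ∀ u ∈ v, u ∉ x) (hvy : ∀ u ∈ v, u ∉ y)
    (hX : ∀ s ∈ X, ∃ s' ∈ X, x.map s = x.map s' ∧ y.map s ≠ y.map s') :
    ∃ X', IsVariant v X X' ∧
      (∀ t ∈ X', ∃ t' ∈ X', x.map t = x.map t' ∧ v.map t = y.map t') ∧
        ∀ t ∈ X', v.map t ≠ y.map t := by
  set X' : Team M := {t | ∃ s ∈ X, ∃ s' ∈ X, x.map s = x.map s' ∧ y.map s ≠ y.map s' ∧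
    (∀ u ∉ v, t u = s u) ∧ v.map t = y.map s'}
  have extend {s s'} (hs : s ∈ X) (hs' : s' ∈ X) (hx : x.map s = x.map s')
      (hy : y.map s ≠ y.map s') : ∃ t ∈ X', ∀ u ∉ v, t u = s u := by
    obtain ⟨t, hts, htv⟩ := exists_eqOn_compl_map_eq s hvnd (as := y.map s') (by simp [hlen])
    exact ⟨t, ⟨s, hs, s', hs', hx, hy, hts, htv⟩, hts⟩
  refine ⟨X', ⟨?_, ?_⟩, ?_, ?_⟩
  · rintro t ⟨s, hs, -, -, -, -, hts, -⟩
    exact ⟨s, hs, hts⟩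
  · intro s hs
    obtain ⟨s', hs', hx, hy⟩ := hX s hs
    exact extend hs hs' hx hy
  · rintro t ⟨s, -, s', hs', hx, -, hts, htv⟩
    obtain ⟨s'', hs'', hx', hy'⟩ := hX s' hs'
    obtain ⟨t', ht', hts'⟩ := extend hs' hs'' hx' hy'
    refine ⟨t', ht', ?_, ?_⟩
    · rw [map_eq_map_of_eqOn_compl hvx hts, hx, map_eq_map_of_eqOn_compl hvx hts']
    · rw [htv, map_eq_map_of_eqOn_compl hvy hts']
  · rintro t ⟨s, -, s', -, -, hy, hts, htv⟩
    rwa [htv, map_eq_map_of_eqOn_compl hvy hts, ne_comm]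

lemma anonymity_of_variant (hvx : ∀ u ∈ v, u ∉ x) (hvy : ∀ u ∈ v, u ∉ y) {X' : Team M}
    (hXX' : IsVariant v X X')
    (hincl : ∀ t ∈ X', ∃ t' ∈ X', x.map t = x.map t' ∧ v.map t = y.map t')
    (hneq : ∀ t ∈ X', v.map t ≠ y.map t) :
    ∀ s ∈ X, ∃ s' ∈ X, x.map s = x.map s' ∧ y.map s ≠ y.map s' := by
  intro s hs
  obtain ⟨t, ht, hts⟩ := hXX'.2 s hs
  obtain ⟨t', ht', hx, hv⟩ := hincl t ht
  obtain ⟨s', hs', hts'⟩ := hXX'.1 t' ht'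
  refine ⟨s', hs', ?_, fun hy => hneq t ht ?_⟩
  · rw [← map_eq_map_of_eqOn_compl hvx hts, hx, map_eq_map_of_eqOn_compl hvx hts']
  · rw [hv, map_eq_map_of_eqOn_compl hvy hts', ← hy, map_eq_map_of_eqOn_compl hvy hts]

end Anonymity

/-- the anonymity atom `𝗑Υ𝗒` is definable in inclusion logic:
`𝗑Υ𝗒 ≡ ∃𝗏(𝗑𝗏 ⊆ 𝗑𝗒 ∧ 𝗏 ≠ 𝗒)` where `𝗏` is fresh and `𝗏 ≠ 𝗒` is the
(team-splitting) disjunction `⋁ᵢ vᵢ ≠ yᵢ`. -/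
theorem anonymity_definable (x y v : List ℕ) (X : Team M)
    (hlen : v.length = y.length) (hvnd : v.Nodup)
    (hvx : ∀ u ∈ v, u ∉ x) (hvy : ∀ u ∈ v, u ∉ y) :
    (∀ s ∈ X, ∃ s' ∈ X, x.map s = x.map s' ∧ y.map s ≠ y.map s') ↔
      IncForm.tsat (IncForm.exs v (.and (.incl (x ++ v) (x ++ y))
        (bigOrI ((v.zip y).map fun pr => .fo (neqAtom pr.1 pr.2))))) X := by
  simp only [tsat_exs_iff, tsat_incl_and_neq_iff hlen]
  constructor
  · exact exists_variant_of_anonymity hlen hvnd hvx hvy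
  · rintro ⟨X', hXX', hincl, hneq⟩
    exact anonymity_of_variant hvx hvy hXX' hincl hneq

end TeamSem
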